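/- The number of elementary differentials (rooted-tree terms) obtained by fully expanding the k-th derivative of the solution of y' = F(y) equals the number of rooted trees with k vertices: 1, 1, 2, 4, 9, 20, 48 for k = 1,…,7. Formally: the k-th derivative y^{(k)}(t) is a linear combination, with positive integer coefficients, of exactly r_k distinct elementary differentials, where r_k is the number of unlabeled rooted trees on k vertices. -/

import Mathlib

/-- Rooted trees, encoding elementary differentials: a node with children
`[t₁,…,tₘ]` encodes `F^{(m)}(D(t₁),…,D(tₘ))`. -/
inductive RTree : Type
  | node : List RTree → RTree

namespace RTree

/-- Number of vertices. -/
def size : RTree → ℕ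
  | node l => 1 + (l.attach.map (fun x => size x.1)).sum
decreasing_by
  have := List.sizeOf_lt_of_mem x.2
  simp only [RTree.node.sizeOf_spec] at *
  omega

/-- Equality of rooted trees up to permutation of children (unlabeled rooted
trees); two expanded elementary differentials coincide iff their trees are
equivalent in this sense. -/
inductive Equiv : RTree → RTree → Prop
  | nil : Equiv (node []) (node [])
  | cons {a b : RTree} {l l' : List RTree} :
      Equiv a b → Equiv (node l) (node l') → Equiv (node (a :: l)) (node (b :: l'))
  | swap (a b : RTree) (l : List RTree) :
      Equiv (node (a :: b :: l)) (node (b :: a :: l))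
  | trans {a b c : RTree} : Equiv a b → Equiv b c → Equiv a c

mutual
  /-- Differentiating the elementary differential of a tree by the chain and
  product rules: attach a new leaf to each vertex; the resulting list of trees
  (with repetitions) is the list of resulting terms. -/
  def grow : RTree → List RTree
    | node l => node (node [] :: l) :: (growList l).map node

  def growList : List RTree → List (List RTree)
    | [] => []
    | t :: ts => ((grow t).map (· :: ts)) ++ ((growList ts).map (t :: ·))
end

/-- The list of terms (elementary differentials, with repetitions according to
their integer coefficients) in the expansion of the `k`-th derivative
`y⁽ᵏ⁾` of a solution of `y' = F(y)`: `terms 1 = [•]` and each further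
differentiation applies `grow` to every term. -/
def terms : ℕ → List RTree
  | 0 => []
  | 1 => [node []]
  | (k + 1) => (terms k).flatMap grow

end RTree

/-! Differentiating an elementary differential by the chain and product rules attaches a new
leaf to each vertex of its tree, so every term of `y⁽ᵏ⁾` is a tree with `k` vertices. Two terms
are the same elementary differential iff their trees agree up to reordering children, and this is
decided by a canonical form that sorts children recursively along an injective encoding of trees
into `ℕ`. A maximal pairwise-inequivalent sublist of the terms then represents every class exactly
once, and its length for `k ≤ 7` is computed by kernel evaluation. -/

theorem List.insertionSort_eq_iff_perm {α : Type*} [LinearOrder α] {l l' : List α} :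
    l.insertionSort (· ≤ ·) = l'.insertionSort (· ≤ ·) ↔ l.Perm l' := by
  refine ⟨fun h => ?_, fun h => ?_⟩
  · exact (List.perm_insertionSort _ l).symm.trans (h ▸ List.perm_insertionSort _ l')
  · exact List.Perm.eq_of_pairwise' (List.pairwise_insertionSort _ l)
      (List.pairwise_insertionSort _ l')
      ((List.perm_insertionSort _ l).trans (h.trans (List.perm_insertionSort _ l').symm))

theorem List.exists_rel_mem_pwFilter_not {α : Type*} {R : α → α → Prop} [DecidableRel R]
    (hrefl : ∀ a, R a a) (htrans : ∀ {a b c}, R a b → R b c → R a c) {l : List α} {a : α}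
    (ha : a ∈ l) : ∃ b ∈ l.pwFilter (fun x y => ¬ R x y), R a b := by
  by_contra! h
  have neg_trans {x y z : α} (hxz : ¬ R x z) : ¬ R x y ∨ ¬ R y z := by
    by_contra! hxyz
    exact hxz (htrans hxyz.1 hxyz.2)
  exact (List.forall_mem_pwFilter (R := fun x y => ¬ R x y) neg_trans a l).mp h a ha (hrefl a)

namespace RTree

mutual
  def enc : RTree → ℕ
    | node l => encList l
  def encList : List RTree → ℕ
    | [] => 0
    | t :: ts => Nat.pair (enc t) (encList ts) + 1
end

mutual
  theorem enc_injective : ∀ {a b : RTree}, enc a = enc b → a = b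
    | node _, node _, h => congrArg node (encList_injective h)
  theorem encList_injective : ∀ {l l' : List RTree}, encList l = encList l' → l = l'
    | [], [], _ => rfl
    | [], _ :: _, h | _ :: _, [], h => by simp [encList] at h
    | _ :: _, _ :: _, h => by
        obtain ⟨h₁, h₂⟩ := Nat.pair_eq_pair.mp (Nat.succ_injective h)
        rw [enc_injective h₁, encList_injective h₂]
end

instance : LinearOrder RTree := LinearOrder.lift' enc fun _ _ => enc_injective

-- Structural mutual recursion, rather than `l.map canon`, keeps `canon` reducible by the kernel,
-- which evaluates it to count the classes.
mutual
  def canon : RTree → RTree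
    | node l => node ((canonList l).insertionSort (· ≤ ·))
  def canonList : List RTree → List RTree
    | [] => []
    | t :: ts => canon t :: canonList ts
end

theorem canonList_eq_map : ∀ l : List RTree, canonList l = l.map canon
  | [] => rfl
  | t :: ts => by rw [canonList, List.map_cons, canonList_eq_map ts]

theorem canon_node_eq_iff {l l' : List RTree} :
    canon (node l) = canon (node l') ↔ (l.map canon).Perm (l'.map canon) := by
  rw [canon, canon, node.injEq, List.insertionSort_eq_iff_perm, canonList_eq_map,
    canonList_eq_map]

theorem canon_eq_of_equiv {a b : RTree} (h : Equiv a b) : canon a = canon b := by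
  induction h with
  | nil => rfl
  | cons _ _ iha ihl =>
    rw [canon_node_eq_iff] at ihl ⊢
    rw [List.map_cons, List.map_cons, iha]
    exact ihl.cons _
  | swap => exact canon_node_eq_iff.mpr (.swap _ _ _)
  | trans _ _ ih₁ ih₂ => exact ih₁.trans ih₂

theorem Equiv.node_of_forall₂ {l l' : List RTree} (h : List.Forall₂ Equiv l l') :
    Equiv (node l) (node l') := by
  induction h with
  | nil => exact .nil
  | cons h _ ih => exact .cons h ih

protected theorem Equiv.refl : ∀ t : RTree, Equiv t t
  | node l => .node_of_forall₂ (List.forall₂_same.mpr fun x _ => Equiv.refl x)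

protected theorem Equiv.symm {a b : RTree} (h : Equiv a b) : Equiv b a := by
  induction h with
  | nil => exact .nil
  | cons _ _ ih₁ ih₂ => exact .cons ih₁ ih₂
  | swap a b l => exact .swap b a l
  | trans _ _ ih₁ ih₂ => exact ih₂.trans ih₁

theorem Equiv.node_of_perm {l l' : List RTree} (h : l.Perm l') : Equiv (node l) (node l') := by
  induction h with
  | nil => exact .nil
  | cons x _ ih => exact .cons (.refl x) ih
  | swap x y l => exact .swap y x l
  | trans _ _ ih₁ ih₂ => exact ih₁.trans ih₂

theorem equiv_canon : ∀ t : RTree, Equiv t (canon t)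
  | node l => by
    rw [canon, canonList_eq_map]
    refine .trans (.node_of_forall₂ (l' := l.map canon) ?_)
      (.node_of_perm (List.perm_insertionSort _ _).symm)
    exact List.forall₂_map_right_iff.mpr (List.forall₂_same.mpr fun x _ => equiv_canon x)

theorem equiv_iff_canon_eq {a b : RTree} : Equiv a b ↔ canon a = canon b :=
  ⟨canon_eq_of_equiv, fun h => (equiv_canon a).trans (h ▸ (equiv_canon b).symm)⟩

instance : DecidableRel Equiv := fun _ _ => decidable_of_iff _ equiv_iff_canon_eq.symm

theorem size_node (l : List RTree) : size (node l) = 1 + (l.map size).sum := by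
  rw [size, List.map_attach_eq_pmap, List.pmap_eq_map]

mutual
  theorem size_of_mem_grow : ∀ {t u : RTree}, u ∈ grow t → size u = size t + 1
    | node l, u, h => by
      rw [grow, List.mem_cons, List.mem_map] at h
      rcases h with rfl | ⟨l', hl', rfl⟩
      · simp only [size_node, List.map_cons, List.map_nil, List.sum_cons, List.sum_nil]
        omega
      · rw [size_node, size_node, sum_size_of_mem_growList hl']
        omega
  theorem sum_size_of_mem_growList : ∀ {l l' : List RTree}, l' ∈ growList l →
      (l'.map size).sum = (l.map size).sum + 1
    | [], _, h => by simp [growList] at h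
    | t :: ts, _, h => by
      rw [growList, List.mem_append, List.mem_map, List.mem_map] at h
      rcases h with ⟨u, hu, rfl⟩ | ⟨us, hus, rfl⟩
      · simp only [List.map_cons, List.sum_cons, size_of_mem_grow hu]
        omega
      · simp only [List.map_cons, List.sum_cons, sum_size_of_mem_growList hus]
        omega
end

theorem size_of_mem_terms : ∀ {k : ℕ} {t : RTree}, t ∈ terms k → size t = k
  | 0, _, h => by simp [terms] at h
  | 1, _, h => by
    rw [terms, List.mem_singleton] at h
    rw [h, size_node]
    rfl
  | k + 2, _, h => by
    obtain ⟨s, hs, ht⟩ := List.mem_flatMap.mp h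
    rw [size_of_mem_grow ht, size_of_mem_terms hs]

end RTree

/-- The fully expanded `k`-th derivative of a solution of `y' = F(y)` is a
linear combination, with positive integer coefficients, of exactly `r_k`
distinct elementary differentials, where `r_k` is the number of unlabeled
rooted trees on `k` vertices: `r_k = 1, 1, 2, 4, 9, 20, 48` for
`k = 1, …, 7`. Formally: for each such `k` there is a list of pairwise
inequivalent representative trees, of the stated length, such that every term
of the expansion is equivalent to exactly one representative (and every tree
in `terms k` has `k` vertices). -/
theorem elementary_differentials_count :
    ∀ k : ℕ, 1 ≤ k → k ≤ 7 →
      (∀ t ∈ RTree.terms k, RTree.size t = k) ∧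
      ∃ reps : List RTree,
        reps.length = [1, 1, 2, 4, 9, 20, 48].getD (k - 1) 0 ∧
        (∀ r ∈ reps, r ∈ RTree.terms k) ∧
        reps.Pairwise (fun a b => ¬ RTree.Equiv a b) ∧
        (∀ t ∈ RTree.terms k, ∃ r ∈ reps, RTree.Equiv t r) := by
  intro k h1 h7
  refine ⟨fun _ => RTree.size_of_mem_terms,
    (RTree.terms k).pwFilter (fun a b => ¬ RTree.Equiv a b), ?_,
    fun _ hr => List.pwFilter_subset _ hr, List.pairwise_pwFilter _,
    fun _ ht => List.exists_rel_mem_pwFilter_not RTree.Equiv.refl .trans ht⟩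
  interval_cases k <;> decide +kernel
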